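/- Let A be an n×m real matrix with m ≥ 1, b ∈ ℝⁿ, s ∈ ℝ^m with all entries positive, and s_gap > 0, and let Ã = [A, −b·1_mᵀ], assumed to have full row rank. Suppose η_{Ã}((s, s_gap·1_m)) ≤ 1/10. Let s'_gap = (1 − 1/(10√m))·s_gap. Then s'_gap > 0 and η_{Ã}((s, s'_gap·1_m)) < 21/100. -/

import Mathlib

open Matrix

open Matrix

/-- Euclidean norm of a vector. -/
noncomputable def eucNorm {ι : Type*} [Fintype ι] (v : ι → ℝ) : ℝ :=
  Real.sqrt (v ⬝ᵥ v)

/-- The diagonal matrix `S⁻¹` with entries `1 / s i`. -/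
noncomputable def diagInv {ι : Type*} [Fintype ι] [DecidableEq ι] (s : ι → ℝ) :
    Matrix ι ι ℝ :=
  Matrix.diagonal fun i => (s i)⁻¹

/-- `x_A(s) = S⁻¹ (1 - S⁻¹ Aᵀ (A S⁻² Aᵀ)⁻¹ A S⁻¹ 1)`. -/
noncomputable def xA {n m : ℕ} (A : Matrix (Fin n) (Fin m) ℝ) (s : Fin m → ℝ) :
    Fin m → ℝ :=
  (diagInv s *ᵥ fun _ => 1) -
    ((diagInv s * diagInv s * Aᵀ * (A * diagInv s * diagInv s * Aᵀ)⁻¹ * A * diagInv s) *ᵥ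
      fun _ => 1)

/-- `η_A(s) = ‖S⁻¹ Aᵀ (A S⁻² Aᵀ)⁻¹ A S⁻¹ 1‖`. -/
noncomputable def etaA {κ ι : Type*} [Fintype κ] [Fintype ι] [DecidableEq κ] [DecidableEq ι]
    (B : Matrix κ ι ℝ) (t : ι → ℝ) : ℝ :=
  eucNorm ((diagInv t * Bᵀ * (B * diagInv t * diagInv t * Bᵀ)⁻¹ * B * diagInv t) *ᵥ
    fun _ => 1)

/-!
Put `M = Ã T⁻¹` and `M' = Ã T'⁻¹ = M D⁻¹` with `D = diag d`, `d = (1, 1 - δ)`, `δ = 1/(10√m)`.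
Then `u = Mᵀ(MMᵀ)⁻¹M 1` and `u' = M'ᵀ(M'M'ᵀ)⁻¹M' 1` are the orthogonal projections of `1`
onto the row spaces of `M` and `M'`, so `‖u'‖² = ⟨1, u'⟩`, and `u' = D⁻¹ v` for some `v` in the
row space of `M`, whence `⟨d, u'⟩ = ⟨1, v⟩ = ⟨u, v⟩`. Splitting `1 = d + (1 - d)` and using
Cauchy–Schwarz together with `‖v‖ ≤ ‖u'‖` gives `‖u'‖² ≤ (‖u‖ + ‖1 - d‖) ‖u'‖`, that is
`η' ≤ η + δ √m = η + 1/10 ≤ 1/5`.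
-/

section eucNorm

variable {ι : Type*} [Fintype ι]

lemma eucNorm_nonneg (v : ι → ℝ) : 0 ≤ eucNorm v :=
  Real.sqrt_nonneg _

lemma eucNorm_sq (v : ι → ℝ) : eucNorm v ^ 2 = v ⬝ᵥ v :=
  Real.sq_sqrt (dotProduct_self_star_nonneg v)

lemma eucNorm_eq_norm_toLp (v : ι → ℝ) :
    eucNorm v = ‖(WithLp.toLp 2 v : EuclideanSpace ℝ ι)‖ := by
  simp [eucNorm, EuclideanSpace.norm_eq, dotProduct, sq]

lemma dotProduct_le_eucNorm_mul_eucNorm (x y : ι → ℝ) : x ⬝ᵥ y ≤ eucNorm x * eucNorm y := by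
  simpa [eucNorm_eq_norm_toLp, EuclideanSpace.inner_toLp_toLp, dotProduct_comm] using
    real_inner_le_norm (WithLp.toLp 2 x : EuclideanSpace ℝ ι) (WithLp.toLp 2 y)

lemma eucNorm_le_eucNorm_of_abs_le {x y : ι → ℝ} (h : ∀ i, |x i| ≤ |y i|) :
    eucNorm x ≤ eucNorm y :=
  Real.sqrt_le_sqrt <| Finset.sum_le_sum fun i _ => by
    simpa only [abs_mul_abs_self] using mul_self_le_mul_self (abs_nonneg _) (h i)

end eucNorm

section RowSpace

variable {κ ι : Type*} [Fintype κ] [Fintype ι] [DecidableEq κ]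

lemma isUnit_mul_transpose_of_rank_eq_card {M : Matrix κ ι ℝ} (h : M.rank = Fintype.card κ) :
    IsUnit (M * Mᵀ) := by
  rw [← mulVec_surjective_iff_isUnit, ← Matrix.coe_mulVecLin, ← LinearMap.range_eq_top]
  apply Submodule.eq_top_of_finrank_eq
  rw [← Matrix.rank, rank_self_mul_transpose, h, Module.finrank_fintype_fun_eq_card]

noncomputable def rowSpaceProj (M : Matrix κ ι ℝ) (w : ι → ℝ) : ι → ℝ :=
  Mᵀ *ᵥ ((M * Mᵀ)⁻¹ *ᵥ (M *ᵥ w))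

lemma rowSpaceProj_dotProduct_transpose_mulVec {M : Matrix κ ι ℝ} (h : IsUnit (M * Mᵀ))
    (w : ι → ℝ) (y : κ → ℝ) : rowSpaceProj M w ⬝ᵥ (Mᵀ *ᵥ y) = w ⬝ᵥ (Mᵀ *ᵥ y) := by
  rw [rowSpaceProj, dotProduct_transpose_mulVec, dotProduct_transpose_mulVec, mulVec_mulVec,
    mulVec_mulVec, mul_nonsing_inv _ ((isUnit_iff_isUnit_det _).mp h), one_mulVec]

end RowSpace

section diagInv

variable {ι : Type*} [Fintype ι] [DecidableEq ι]

lemma diagInv_transpose (t : ι → ℝ) : (diagInv t)ᵀ = diagInv t :=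
  diagonal_transpose _

lemma diagInv_mul (t d : ι → ℝ) : diagInv (t * d) = diagInv t * diagInv d := by
  simp only [diagInv, diagonal_mul_diagonal, Pi.mul_apply, mul_inv]

lemma rank_mul_diagInv {κ : Type*} [Fintype κ] (B : Matrix κ ι ℝ) {t : ι → ℝ}
    (ht : ∀ i, t i ≠ 0) : (B * diagInv t).rank = B.rank :=
  rank_mul_eq_left_of_isUnit_det _ _ <| by
    simpa [diagInv, det_diagonal, Finset.prod_ne_zero_iff] using ht

lemma etaA_eq_eucNorm_rowSpaceProj {κ : Type*} [Fintype κ] [DecidableEq κ]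
    (B : Matrix κ ι ℝ) (t : ι → ℝ) :
    etaA B t = eucNorm (rowSpaceProj (B * diagInv t) 1) := by
  simp only [etaA, rowSpaceProj, transpose_mul, diagInv_transpose, mulVec_mulVec,
    Matrix.mul_assoc]
  rfl

end diagInv

theorem etaA_mul_le {κ ι : Type*} [Fintype κ] [Fintype ι] [DecidableEq κ] [DecidableEq ι]
    {B : Matrix κ ι ℝ} (hB : B.rank = Fintype.card κ) {t d : ι → ℝ} (ht : ∀ i, t i ≠ 0)
    (hd : ∀ i, d i ≠ 0) (hd_le : ∀ i, |d i| ≤ 1) :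
    etaA B (t * d) ≤ etaA B t + eucNorm (1 - d) := by
  set M := B * diagInv t
  set M' := M * diagInv d
  have hG : IsUnit (M * Mᵀ) := isUnit_mul_transpose_of_rank_eq_card <| by
    rw [rank_mul_diagInv _ ht, hB]
  have hG' : IsUnit (M' * M'ᵀ) := isUnit_mul_transpose_of_rank_eq_card <| by
    rw [rank_mul_diagInv _ hd, rank_mul_diagInv _ ht, hB]
  rw [etaA_eq_eucNorm_rowSpaceProj, etaA_eq_eucNorm_rowSpaceProj, diagInv_mul, ← Matrix.mul_assoc]
  set u := rowSpaceProj M 1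
  set u' := rowSpaceProj M' 1
  set y := (M' * M'ᵀ)⁻¹ *ᵥ (M' *ᵥ 1)
  set v := Mᵀ *ᵥ y
  have hu' : u' = diagInv d *ᵥ v := by
    rw [mulVec_mulVec, ← diagInv_transpose, ← transpose_mul]
    rfl
  have hv_apply (i : ι) : v i = d i * u' i := by
    rw [hu', diagInv, mulVec_diagonal, mul_inv_cancel_left₀ (hd i)]
  have hsq : eucNorm u' ^ 2 = 1 ⬝ᵥ u' := by
    rw [eucNorm_sq]
    exact rowSpaceProj_dotProduct_transpose_mulVec hG' 1 y
  have hsplit : 1 ⬝ᵥ u' = u ⬝ᵥ v + (1 - d) ⬝ᵥ u' := by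
    have hdu' : d ⬝ᵥ u' = 1 ⬝ᵥ v := by
      simp only [dotProduct, hv_apply, Pi.one_apply, one_mul]
    rw [sub_dotProduct, hdu', rowSpaceProj_dotProduct_transpose_mulVec hG]
    ring
  have hv : eucNorm v ≤ eucNorm u' := eucNorm_le_eucNorm_of_abs_le fun i => by
    rw [hv_apply, abs_mul]
    exact mul_le_of_le_one_left (abs_nonneg _) (hd_le i)
  have hN : eucNorm u' ^ 2 ≤ (eucNorm u + eucNorm (1 - d)) * eucNorm u' :=
    calc eucNorm u' ^ 2 = u ⬝ᵥ v + (1 - d) ⬝ᵥ u' := hsq.trans hsplit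
      _ ≤ eucNorm u * eucNorm v + eucNorm (1 - d) * eucNorm u' :=
        add_le_add (dotProduct_le_eucNorm_mul_eucNorm u v)
          (dotProduct_le_eucNorm_mul_eucNorm (1 - d) u')
      _ ≤ (eucNorm u + eucNorm (1 - d)) * eucNorm u' := by
        rw [add_mul]
        exact add_le_add_left (mul_le_mul_of_nonneg_left hv (eucNorm_nonneg u)) _
  nlinarith [eucNorm_nonneg u', eucNorm_nonneg u, eucNorm_nonneg (1 - d)]

theorem etaA_sum_elim_mul_le {κ ι ι' : Type*} [Fintype κ] [Fintype ι] [Fintype ι']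
    [DecidableEq κ] [DecidableEq ι] [DecidableEq ι'] {B : Matrix κ (ι ⊕ ι') ℝ}
    (hB : B.rank = Fintype.card κ) {s : ι → ℝ} {g : ℝ} (hs : ∀ i, s i ≠ 0) (hg : g ≠ 0)
    {δ : ℝ} (hδ_nonneg : 0 ≤ δ) (hδ_lt : δ < 1) :
    etaA B (Sum.elim s fun _ => (1 - δ) * g) ≤
      etaA B (Sum.elim s fun _ => g) + δ * Real.sqrt (Fintype.card ι') := by
  set d : ι ⊕ ι' → ℝ := Sum.elim 1 fun _ => 1 - δ
  have hd_mem (i : ι ⊕ ι') : 0 < d i ∧ d i ≤ 1 := by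
    rcases i with i | i <;> simp only [d, Sum.elim_inl, Sum.elim_inr, Pi.one_apply] <;>
      constructor <;> linarith
  have hscale : (Sum.elim s fun _ => (1 - δ) * g) = (Sum.elim s fun _ => g) * d := by
    ext (i | i) <;> simp [d, mul_comm]
  have hd_norm : eucNorm (1 - d) = δ * Real.sqrt (Fintype.card ι') := by
    rw [eucNorm, ← Real.sqrt_sq (by positivity : 0 ≤ δ * Real.sqrt (Fintype.card ι'))]
    congr 1
    simp [d, dotProduct, Fintype.sum_sum_type]
    linear_combination (-(δ * δ)) * Real.mul_self_sqrt (Nat.cast_nonneg (Fintype.card ι'))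
  rw [hscale, ← hd_norm]
  refine etaA_mul_le hB ?_ (fun i => (hd_mem i).1.ne') fun i =>
    (abs_of_pos (hd_mem i).1).trans_le (hd_mem i).2
  rintro (i | _)
  · simpa using hs i
  · simpa using hg

theorem shift_eta_bound_general {n m : ℕ} (hm : 1 ≤ m) (s : Fin m → ℝ) (hs : ∀ i, 0 < s i) (sgap : ℝ)
    (hsgap : 0 < sgap) (Atil : Matrix (Fin n) (Fin m ⊕ Fin m) ℝ)
    (hrank : Atil.rank = n)
    (hη : etaA Atil (Sum.elim s fun _ => sgap) ≤ 1 / 10)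
    (sgap' : ℝ) (hsgap' : sgap' = (1 - 1 / (10 * Real.sqrt m)) * sgap) :
    0 < sgap' ∧ etaA Atil (Sum.elim s fun _ => sgap') < 21 / 100 := by
  have hsqrt : 1 ≤ Real.sqrt m := Real.one_le_sqrt.mpr (by exact_mod_cast hm)
  set δ := 1 / (10 * Real.sqrt m) with hδ
  have hδ_lt : δ < 1 := by
    rw [hδ, div_lt_one (by positivity)]
    linarith
  have hδ_sqrt : δ * Real.sqrt m = 1 / 10 := by
    rw [hδ]
    field_simp
  refine ⟨hsgap' ▸ mul_pos (by linarith) hsgap, ?_⟩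
  calc etaA Atil (Sum.elim s fun _ => sgap')
      ≤ etaA Atil (Sum.elim s fun _ => sgap) + δ * Real.sqrt (Fintype.card (Fin m)) := by
        rw [hsgap']
        exact etaA_sum_elim_mul_le (by rw [hrank, Fintype.card_fin]) (fun i => (hs i).ne')
          hsgap.ne' (by positivity) hδ_lt
    _ < 21 / 100 := by
        rw [Fintype.card_fin, hδ_sqrt]
        linarith

/-- **Shifting the objective bound.** If `Ã = [A, -b 1ᵀ]` has full row rank and
`η_{Ã}((s, s_gap 1)) ≤ 1/10`, then `s'_gap = (1 - 1/(10√m)) s_gap` is positive and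
`η_{Ã}((s, s'_gap 1)) < 21/100`. -/
theorem shift_eta_bound {n m : ℕ} (hm : 1 ≤ m) (A : Matrix (Fin n) (Fin m) ℝ)
    (b : Fin n → ℝ) (s : Fin m → ℝ) (hs : ∀ i, 0 < s i) (sgap : ℝ) (hsgap : 0 < sgap)
    (Atil : Matrix (Fin n) (Fin m ⊕ Fin m) ℝ)
    (hAtil : Atil = Matrix.fromCols A (Matrix.of fun i (_ : Fin m) => -b i))
    (hrank : Atil.rank = n)
    (hη : etaA Atil (Sum.elim s fun _ => sgap) ≤ 1 / 10)
    (sgap' : ℝ) (hsgap' : sgap' = (1 - 1 / (10 * Real.sqrt m)) * sgap) :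
    0 < sgap' ∧ etaA Atil (Sum.elim s fun _ => sgap') < 21 / 100 :=
  shift_eta_bound_general hm s hs sgap hsgap Atil hrank hη sgap' hsgap'
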